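/- For every maximal representative x of a finite pointed model M, the bound of x in M equals the bound of its representative class [x]_{b(x)} in the rooted k-contraction of M: b(x) = b([x]_{b(x)}). -/

import Mathlib

/-- A finite pointed Kripke model with modality indices `I` and atoms `P`. -/
structure PModel (I P : Type) where
  W : Type
  fin : Finite W
  R : I → W → W → Prop
  V : P → W → Prop
  d : W

variable {I P : Type}

/-- `h`-bisimilarity between worlds of two models (back-and-forth to depth `h`). -/
def Bisim (M N : PModel I P) : ℕ → M.W → N.W → Prop
  | 0, w, v => ∀ p, M.V p w ↔ N.V p v
  | h+1, w, v => (∀ p, M.V p w ↔ N.V p v)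
      ∧ (∀ i w', M.R i w w' → ∃ v', N.R i v v' ∧ Bisim M N h w' v')
      ∧ (∀ i v', N.R i v v' → ∃ w', M.R i w w' ∧ Bisim M N h w' v')

/-- `k`-bisimilarity of pointed models. -/
def PBisim (k : ℕ) (M N : PModel I P) : Prop := Bisim M N k M.d N.d

/-- Directed paths of length `n`. -/
def Steps (M : PModel I P) : ℕ → M.W → M.W → Prop
  | 0, w, v => w = v
  | n+1, w, v => ∃ u i, M.R i w u ∧ Steps M n u v

/-- Depth of a world: length of a shortest path from the designated world (`⊤` if none). -/
noncomputable def depth (M : PModel I P) (w : M.W) : ℕ∞ :=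
  sInf {n : ℕ∞ | ∃ m : ℕ, n = (m : ℕ∞) ∧ Steps M m M.d w}

/-- Bound `b(w) = k − d(w)`, with `⊥` for unreachable worlds. -/
noncomputable def bound (k : ℕ) (M : PModel I P) (w : M.W) : WithBot ℤ :=
  ENat.recTopCoe (⊥ : WithBot ℤ) (fun n : ℕ => (((k : ℤ) - n : ℤ) : WithBot ℤ)) (depth M w)

/-- The bound as a natural number (meaningful when `0 ≤ bound k M w`). -/
noncomputable def nbound (k : ℕ) (M : PModel I P) (w : M.W) : ℕ :=
  k - (depth M w).toNat
/-- `x` represents `y` : `b(x) ≥ b(y) ≥ 0` and `x ∼_{b(y)} y`. -/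
noncomputable def Repr' (k : ℕ) (M : PModel I P) (x y : M.W) : Prop :=
  0 ≤ bound k M y ∧ bound k M y ≤ bound k M x ∧ Bisim M M (nbound k M y) x y

/-- `x` strictly represents `y`. -/
noncomputable def SRepr (k : ℕ) (M : PModel I P) (x y : M.W) : Prop :=
  Repr' k M x y ∧ bound k M y < bound k M x

/-- Maximal representatives. -/
noncomputable def maxRepr (k : ℕ) (M : PModel I P) : Set M.W :=
  {x | 0 ≤ bound k M x ∧ ∀ y, ¬ SRepr k M y x}

/-- Representative class `[x]_{b(x)}`. -/
noncomputable def reprClass (k : ℕ) (M : PModel I P) (x : M.W) : Set M.W :=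
  {y | Bisim M M (nbound k M x) x y}

lemma depth_d (M : PModel I P) : depth M M.d = 0 := by
  have h0 : (0 : ℕ∞) ∈ {n : ℕ∞ | ∃ m : ℕ, n = (m : ℕ∞) ∧ Steps M m M.d M.d} :=
    ⟨0, by simp, rfl⟩
  have := sInf_le h0
  simpa [depth, le_zero_iff] using this

lemma bound_d (k : ℕ) (M : PModel I P) : bound k M M.d = ((k : ℤ) : WithBot ℤ) := by
  have h := depth_d M
  simp only [bound, h, ENat.recTopCoe_zero]
  norm_num

lemma bound_le (k : ℕ) (M : PModel I P) (w : M.W) : bound k M w ≤ ((k : ℤ) : WithBot ℤ) := by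
  simp only [bound]
  by_cases hd : depth M w = ⊤
  · simp [hd]
  · lift depth M w to ℕ using hd with n hn
    simp only [ENat.recTopCoe_coe]
    exact_mod_cast (by omega : (k : ℤ) - n ≤ (k:ℤ))

lemma d_mem_maxRepr (k : ℕ) (M : PModel I P) : M.d ∈ maxRepr k M := by
  constructor
  · rw [bound_d]; exact_mod_cast Int.ofNat_nonneg k
  · rintro y ⟨_, hlt⟩
    exact absurd (lt_of_lt_of_le hlt (bound_le k M y)) (by rw [bound_d]; exact lt_irrefl _)

/-- Carrier of the rooted k-contraction: representative classes of maximal representatives. -/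
def ContrW (k : ℕ) (M : PModel I P) : Type :=
  {S : Set M.W // ∃ x ∈ maxRepr k M, S = reprClass k M x}

instance (k : ℕ) (M : PModel I P) : Finite (ContrW k M) := by
  have := M.fin
  exact Subtype.finite

/-- The rooted `k`-contraction. -/
noncomputable def rootedContraction (k : ℕ) (M : PModel I P) : PModel I P where
  W := ContrW k M
  fin := inferInstance
  R := fun i S T => ∃ x ∈ maxRepr k M, ∃ y ∈ maxRepr k M,
        S.1 = reprClass k M x ∧ T.1 = reprClass k M y ∧
        0 < bound k M x ∧ ∃ z, M.R i x z ∧ Bisim M M (nbound k M x - 1) y z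
  V := fun p S => ∃ x ∈ maxRepr k M, S.1 = reprClass k M x ∧ M.V p x
  d := ⟨reprClass k M M.d, M.d, d_mem_maxRepr k M, rfl⟩

/-!
The depth of `[x]` in the contraction equals the depth of `x`, and the bound is a function
of the depth. A shortest path `d → ⋯ → u → x` lifts to the contraction: a maximal
representative `v` of `u` has a successor `z` that is `b(x)`-bisimilar to `x`, so maximality
of `x` gives `d(x) ≤ d(z) ≤ d(v) + 1`, hence `d(v) = d(u)` and `[v] → [x]` is an edge.
Conversely, along an edge `[a] → [b]` with witness `a → z` the depth grows by at most one:
either `d(b) ≤ d(a)`, or `b(b) ≤ b(a) - 1` makes `z` a representative of `b`, and maximality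
of `b` gives `d(b) ≤ d(z) ≤ d(a) + 1`.
-/

namespace Bisim

variable {M N K : PModel I P}

theorem of_succ : ∀ {h : ℕ} {w : M.W} {v : N.W}, Bisim M N (h + 1) w v → Bisim M N h w v
  | 0, _, _, hb => hb.1
  | _ + 1, _, _, ⟨hV, hforth, hback⟩ =>
    ⟨hV, fun i w' hr => (hforth i w' hr).imp fun _ ⟨hr', hb⟩ => ⟨hr', of_succ hb⟩,
      fun i v' hr => (hback i v' hr).imp fun _ ⟨hr', hb⟩ => ⟨hr', of_succ hb⟩⟩

theorem mono {h' h : ℕ} (hle : h' ≤ h) {w : M.W} {v : N.W} (hb : Bisim M N h w v) :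
    Bisim M N h' w v := by
  induction hle with
  | refl => exact hb
  | step _ ih => exact ih hb.of_succ

theorem refl : ∀ (h : ℕ) (w : M.W), Bisim M M h w w
  | 0, _ => fun _ => Iff.rfl
  | h + 1, _ => ⟨fun _ => Iff.rfl, fun _ w' hr => ⟨w', hr, refl h w'⟩,
      fun _ v' hr => ⟨v', hr, refl h v'⟩⟩

theorem symm : ∀ {h : ℕ} {w : M.W} {v : N.W}, Bisim M N h w v → Bisim N M h v w
  | 0, _, _, hb => fun p => (hb p).symm
  | _ + 1, _, _, ⟨hV, hforth, hback⟩ =>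
    ⟨fun p => (hV p).symm,
      fun i v' hr => (hback i v' hr).imp fun _ ⟨hr', hb⟩ => ⟨hr', symm hb⟩,
      fun i w' hr => (hforth i w' hr).imp fun _ ⟨hr', hb⟩ => ⟨hr', symm hb⟩⟩

theorem trans : ∀ {h : ℕ} {a : M.W} {b : N.W} {c : K.W},
    Bisim M N h a b → Bisim N K h b c → Bisim M K h a c
  | 0, _, _, _, hab, hbc => fun p => (hab p).trans (hbc p)
  | _ + 1, _, _, _, ⟨hV, hforth, hback⟩, ⟨hV', hforth', hback'⟩ =>
    ⟨fun p => (hV p).trans (hV' p),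
      fun i a' hr =>
        let ⟨b', hb', hab⟩ := hforth i a' hr
        let ⟨c', hc', hbc⟩ := hforth' i b' hb'
        ⟨c', hc', trans hab hbc⟩,
      fun i c' hr =>
        let ⟨b', hb', hbc⟩ := hback' i c' hr
        let ⟨a', ha', hab⟩ := hback i b' hb'
        ⟨a', ha', trans hab hbc⟩⟩

end Bisim

section Depth

variable {M N : PModel I P}

theorem Steps.snoc {i : I} {a b c : M.W} : ∀ {m : ℕ},
    Steps M m a b → M.R i b c → Steps M (m + 1) a c
  | 0, hs, hr => ⟨c, i, hs ▸ hr, rfl⟩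
  | _ + 1, ⟨u, j, hr, hs⟩, hrc => ⟨u, j, hr, hs.snoc hrc⟩

theorem Steps.unsnoc : ∀ {m : ℕ} {a c : M.W},
    Steps M (m + 1) a c → ∃ b i, Steps M m a b ∧ M.R i b c
  | 0, a, _, ⟨_, i, hr, hs⟩ => ⟨a, i, rfl, hs ▸ hr⟩
  | _ + 1, _, _, ⟨u, j, hr, hs⟩ =>
    let ⟨b, i, hs', hr'⟩ := hs.unsnoc
    ⟨b, i, ⟨u, j, hr, hs'⟩, hr'⟩

theorem depth_le_of_steps {m : ℕ} {w : M.W} (h : Steps M m M.d w) : depth M w ≤ m :=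
  sInf_le ⟨m, rfl, h⟩

theorem steps_of_depth_eq {w : M.W} {m : ℕ} (h : depth M w = m) : Steps M m M.d w := by
  have hne : {n : ℕ∞ | ∃ m : ℕ, n = m ∧ Steps M m M.d w}.Nonempty := by
    by_contra hempty
    rw [Set.not_nonempty_iff_eq_empty] at hempty
    simp [depth, hempty] at h
  obtain ⟨m', hm', hs⟩ := csInf_mem hne
  rw [← depth, h, Nat.cast_inj] at hm'
  exact hm' ▸ hs

theorem depth_le_depth_add_one {i : I} {u w : M.W} (h : M.R i u w) :
    depth M w ≤ depth M u + 1 := by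
  cases hu : depth M u with
  | top => simp
  | coe m => exact_mod_cast depth_le_of_steps ((steps_of_depth_eq hu).snoc h)

theorem exists_rel_of_depth_eq_succ {w : M.W} {m : ℕ} (h : depth M w = (m + 1 : ℕ)) :
    ∃ u i, depth M u = m ∧ M.R i u w := by
  obtain ⟨u, i, hs, hr⟩ := (steps_of_depth_eq h).unsnoc
  obtain ⟨n, hn, hnm⟩ := ENat.le_natCast_iff.1 (depth_le_of_steps hs)
  have hle := depth_le_depth_add_one hr
  rw [h, hn] at hle
  obtain rfl : n = m := by norm_cast at hle; omega
  exact ⟨u, i, hn, hr⟩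

theorem nbound_of_depth_eq {k : ℕ} {w : M.W} {m : ℕ} (h : depth M w = m) :
    nbound k M w = k - m := by
  simp [nbound, h]

theorem bound_le_bound_iff {k : ℕ} {u : M.W} {v : N.W} :
    bound k M u ≤ bound k N v ↔ depth N v ≤ depth M u := by
  cases hu : depth M u <;> cases hv : depth N v
  case coe.coe m n =>
    simp only [bound, hu, hv, ENat.recTopCoe_natCast, WithBot.coe_le_coe, Nat.cast_le]
    omega
  all_goals simp [bound, hu, hv]

theorem bound_nonneg_iff {k : ℕ} {w : M.W} : 0 ≤ bound k M w ↔ depth M w ≤ k := by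
  cases hw : depth M w <;> simp [bound, hw]

theorem bound_pos_iff {k : ℕ} {w : M.W} : 0 < bound k M w ↔ depth M w < k := by
  cases hw : depth M w <;> simp [bound, hw]

end Depth

section Representatives

variable {k : ℕ} {M : PModel I P}

theorem depth_le_of_maxRepr {x z : M.W} (hx : x ∈ maxRepr k M)
    (hb : Bisim M M (nbound k M x) z x) : depth M x ≤ depth M z := by
  rw [← bound_le_bound_iff (k := k)]
  by_contra hlt
  exact hx.2 z ⟨⟨hx.1, (lt_of_not_ge hlt).le, hb⟩, lt_of_not_ge hlt⟩

theorem nbound_le_nbound {u v : M.W} (h : depth M v ≤ depth M u) (hu : depth M u ≠ ⊤) :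
    nbound k M u ≤ nbound k M v :=
  Nat.sub_le_sub_left (ENat.toNat_le_toNat h hu) k

theorem exists_maxRepr {u : M.W} (hu : 0 ≤ bound k M u) :
    ∃ v ∈ maxRepr k M, Repr' k M v u := by
  have := M.fin
  obtain ⟨v, hv, hmax⟩ := Set.Finite.exists_maximalFor (bound k M) {v | Repr' k M v u}
    (Set.toFinite _) ⟨u, hu, le_rfl, Bisim.refl _ u⟩
  obtain ⟨-, huv, hvu⟩ := id hv
  refine ⟨v, ⟨hu.trans huv, ?_⟩, hv⟩
  rintro w ⟨⟨-, hvw, hwv⟩, hlt⟩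
  have hu_fin : depth M u ≠ ⊤ :=
    ne_top_of_le_ne_top (ENat.natCast_ne_top k) (bound_nonneg_iff.1 hu)
  have hnb : nbound k M u ≤ nbound k M v := nbound_le_nbound (bound_le_bound_iff.1 huv) hu_fin
  have hwu : Repr' k M w u := ⟨hu, huv.trans hvw, (hwv.mono hnb).trans hvu⟩
  exact (hmax hwu hlt.le).not_gt hlt

theorem depth_eq_of_reprClass_eq {w y : M.W} (hw : w ∈ maxRepr k M) (hy : y ∈ maxRepr k M)
    (h : reprClass k M w = reprClass k M y) : depth M w = depth M y := by
  have hyw : y ∈ reprClass k M w := h ▸ Bisim.refl _ y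
  have hwy : w ∈ reprClass k M y := h ▸ Bisim.refl _ w
  exact le_antisymm (depth_le_of_maxRepr hw hyw.symm) (depth_le_of_maxRepr hy hwy.symm)

end Representatives

section Contraction

variable {k : ℕ} {M : PModel I P}

def ContrW.ofMaxRepr {x : M.W} (hx : x ∈ maxRepr k M) : ContrW k M :=
  ⟨reprClass k M x, x, hx, rfl⟩

theorem depth_rootedContraction_le {x : M.W} (hx : x ∈ maxRepr k M) :
    depth (rootedContraction k M) (ContrW.ofMaxRepr hx) ≤ depth M x := by
  obtain ⟨m, hdx, -⟩ := ENat.le_natCast_iff.1 (bound_nonneg_iff.1 hx.1)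
  rw [hdx]
  induction m generalizing x with
  | zero =>
    have hxd : M.d = x := steps_of_depth_eq hdx
    subst hxd
    exact depth_le_of_steps (M := rootedContraction k M) (m := 0) rfl
  | succ m ih =>
    have hmk : m < k := by exact_mod_cast hdx ▸ bound_nonneg_iff.1 hx.1
    obtain ⟨u, i, hdu, hux⟩ := exists_rel_of_depth_eq_succ hdx
    have hu : 0 ≤ bound k M u := bound_nonneg_iff.2 (by rw [hdu]; exact_mod_cast hmk.le)
    obtain ⟨v, hv, -, huv, hvu⟩ := exists_maxRepr hu
    rw [nbound_of_depth_eq hdu, (by omega : k - m = (k - m - 1) + 1)] at hvu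
    obtain ⟨z, hvz, hzx⟩ := hvu.2.2 i x hux
    have hxz : depth M x ≤ depth M z :=
      depth_le_of_maxRepr hx (by rwa [nbound_of_depth_eq hdx, Nat.sub_succ'])
    obtain ⟨n, hdv, hnm⟩ := ENat.le_natCast_iff.1 (hdu ▸ bound_le_bound_iff.1 huv)
    obtain rfl : m = n := by
      have := hxz.trans (depth_le_depth_add_one hvz)
      rw [hdx, hdv] at this
      norm_cast at this
      omega
    have hedge : (rootedContraction k M).R i (ContrW.ofMaxRepr hv) (ContrW.ofMaxRepr hx) := by
      have hv_pos : 0 < bound k M v := bound_pos_iff.2 (by rw [hdv]; exact_mod_cast hmk)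
      refine ⟨v, hv, x, hx, rfl, rfl, hv_pos, z, hvz, ?_⟩
      rw [nbound_of_depth_eq hdv]
      exact hzx.symm
    calc depth (rootedContraction k M) (ContrW.ofMaxRepr hx)
        ≤ depth (rootedContraction k M) (ContrW.ofMaxRepr hv) + 1 := depth_le_depth_add_one hedge
      _ ≤ m + 1 := by gcongr; exact ih hv hdv
      _ = (m + 1 : ℕ) := by norm_cast

theorem depth_le_of_steps_rootedContraction : ∀ {n : ℕ} {S : ContrW k M} {w : M.W},
    Steps (rootedContraction k M) n (rootedContraction k M).d S → w ∈ maxRepr k M →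
      S.1 = reprClass k M w → depth M w ≤ n
  | 0, S, w, hS, hw, hSw => by
    have hdw := depth_eq_of_reprClass_eq hw (d_mem_maxRepr k M) (by rw [← hSw, ← hS]; rfl)
    rw [hdw, depth_d, Nat.cast_zero]
  | n + 1, S, w, hS, hw, hSw => by
    obtain ⟨T, i, hT, a, ha, b, hb, hTa, hSb, -, z, haz, hbz⟩ := hS.unsnoc
    have hda : depth M a ≤ n := depth_le_of_steps_rootedContraction hT ha hTa
    rw [depth_eq_of_reprClass_eq hw hb (hSw ▸ hSb)]
    by_cases hab : depth M b ≤ depth M a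
    · exact hab.trans (by exact_mod_cast hda.trans (Nat.cast_le.2 n.le_succ))
    have hdz : depth M b ≤ depth M z := by
      refine depth_le_of_maxRepr hb (hbz.mono ?_).symm
      obtain ⟨ma, hma, -⟩ := ENat.le_natCast_iff.1 hda
      obtain ⟨mb, hmb, -⟩ := ENat.le_natCast_iff.1 (bound_nonneg_iff.1 hb.1)
      have hmab : ma < mb := by rw [hma, hmb, not_le] at hab; exact_mod_cast hab
      rw [nbound_of_depth_eq hma, nbound_of_depth_eq hmb]
      omega
    calc depth M b ≤ depth M z := hdz
      _ ≤ depth M a + 1 := depth_le_depth_add_one haz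
      _ ≤ n + 1 := by gcongr
      _ = (n + 1 : ℕ) := by norm_cast

theorem depth_le_depth_rootedContraction {x : M.W} (hx : x ∈ maxRepr k M) :
    depth M x ≤ depth (rootedContraction k M) (ContrW.ofMaxRepr hx) := by
  cases h : depth (rootedContraction k M) (ContrW.ofMaxRepr hx) with
  | top => exact le_top
  | coe n => exact depth_le_of_steps_rootedContraction (steps_of_depth_eq h) hx rfl

end Contraction

/-- A maximal representative has the same bound as its representative class in the
rooted `k`-contraction. -/
theorem bound_reprClass_eq (k : ℕ) (M : PModel I P) (x : M.W)
    (hx : x ∈ maxRepr k M) :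
    bound k (rootedContraction k M) ⟨reprClass k M x, x, hx, rfl⟩ = bound k M x :=
  le_antisymm (bound_le_bound_iff.2 (depth_le_depth_rootedContraction hx))
    (bound_le_bound_iff.2 (depth_rootedContraction_le hx))
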